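/- arXiv:1304.6762 — 5 statements merged into one kernel-verified Lean document; each statement's English description precedes it below -/
import Mathlib

section
/- If a binary relation < on a set X is well-founded, then the induced multiset ordering on finite multisets over X is well-founded. -/
/-- The Dershowitz–Manna multiset ordering induced by a relation `r` on `X`:
`m < m'` iff `m` is obtained from `m'` by removing a nonempty sub-multiset `S`
and adding a (possibly empty) multiset `T` each of whose elements is `r`-below
some element of `S`. -/
def DMLT {X : Type*} (r : X → X → Prop) (m m' : Multiset X) : Prop :=
  ∃ U S T : Multiset X, S ≠ 0 ∧ m' = U + S ∧ m = U + T ∧ ∀ t ∈ T, ∃ s ∈ S, r t s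

open Relation Multiset in
private lemma DMLT_aux {X : Type*} (r : X → X → Prop) :
    ∀ (S U T : Multiset X), S ≠ 0 → (∀ t ∈ T, ∃ s ∈ S, r t s) →
      Relation.TransGen (Relation.CutExpand r) (U + T) (U + S) := by
  classical
  intro S
  induction S using Multiset.induction with
  | empty => intro _ _ h _; exact absurd rfl h
  | cons a S' IH =>
    intro U T _ hT
    set T1 := T.filter (fun t => r t a) with hT1
    set T2 := T.filter (fun t => ¬ r t a) with hT2
    have hsplit : T1 + T2 = T := Multiset.filter_add_not _ _
    have hT1a : ∀ t ∈ T1, r t a := fun t ht => (Multiset.mem_filter.1 ht).2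
    have step : Relation.CutExpand r (U + T1 + S') (U + (a ::ₘ S')) := by
      refine ⟨T1, a, hT1a, ?_⟩
      have : (a ::ₘ S') = {a} + S' := by simp [Multiset.singleton_add]
      rw [this]
      abel
    by_cases hS' : S' = 0
    · subst hS'
      have hTall : T = T1 := by
        rw [hT1]
        symm
        rw [Multiset.filter_eq_self]
        intro t ht
        obtain ⟨s, hs, hrs⟩ := hT t ht
        simp at hs
        rwa [hs] at hrs
      refine Relation.TransGen.single ?_
      simpa [← hTall] using step
    · have hT2S' : ∀ t ∈ T2, ∃ s ∈ S', r t s := by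
        intro t ht
        have := Multiset.mem_filter.1 ht
        obtain ⟨s, hs, hrs⟩ := hT t this.1
        rcases Multiset.mem_cons.1 hs with rfl | hs'
        · exact absurd hrs this.2
        · exact ⟨s, hs', hrs⟩
      have := IH (U + T1) T2 hS' hT2S'
      rw [add_assoc, hsplit] at this
      exact Relation.TransGen.tail this step

/-- if `r` is well-founded on `X`, then the induced Dershowitz–Manna
multiset ordering on finite multisets over `X` is well-founded. -/
theorem DMLT_wellFounded {X : Type*} (r : X → X → Prop) (hwf : WellFounded r) :
    WellFounded (DMLT r) := by
  have hce : WellFounded (Relation.TransGen (Relation.CutExpand r)) :=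
    hwf.cutExpand.transGen
  refine Subrelation.wf ?_ hce
  rintro m m' ⟨U, S, T, hS, rfl, rfl, hT⟩
  exact DMLT_aux r S U T hS hT
end

section
/- In an abstract rewriting system, let →ₑ and →ₙ be two relations satisfying: whenever π →ₑ π₁ →ₙ π″ there exists π′ with π →ₙ π′ →* π″ (for →* the reflexive-transitive closure of the union). If there exists an infinite (→ₑ ∪ →ₙ)-reduction sequence from π, then there exists an infinite →ₙ-reduction sequence from π, provided additionally that →ₑ is strongly normalizing (every →ₑ-reduction sequence is finite). -/
/-- `Steps r k a b`: there is a reduction sequence of length `k` (i.e. with `k`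
steps) from `a` to `b` for the relation `r`. -/
def Steps {X : Type*} (r : X → X → Prop) : ℕ → X → X → Prop
  | 0, a, b => a = b
  | k + 1, a, b => ∃ c, r a c ∧ Steps r k c b

/-- A relation is finitely branching when every element has finitely many
one-step reducts. -/
def FinBranching {X : Type*} (r : X → X → Prop) : Prop :=
  ∀ a, {b | r a b}.Finite

/-- There is no infinite reduction sequence starting from `a`, i.e. every
reduction sequence from `a` is finite. -/
def SNfrom {X : Type*} (r : X → X → Prop) (a : X) : Prop :=
  ¬ ∃ f : ℕ → X, f 0 = a ∧ ∀ i, r (f i) (f (i + 1))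

/-- There is an infinite `r`-sequence starting from `a`. -/
def InfSeq {X : Type*} (r : X → X → Prop) (a : X) : Prop :=
  ∃ f : ℕ → X, f 0 = a ∧ ∀ i, r (f i) (f (i + 1))

lemma InfSeq.prepend {X : Type*} {r : X → X → Prop} {a b : X}
    (hab : r a b) (h : InfSeq r b) : InfSeq r a := by
  obtain ⟨f, h0, hs⟩ := h
  refine ⟨fun i => Nat.rec a (fun j _ => f j) i, rfl, fun i => ?_⟩
  cases i with
  | zero => simpa [h0] using hab
  | succ i => exact hs i

lemma InfSeq.of_rtg {X : Type*} {r : X → X → Prop} {a c : X}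
    (h : Relation.ReflTransGen r a c) (hc : InfSeq r c) : InfSeq r a := by
  induction h using Relation.ReflTransGen.head_induction_on with
  | refl => exact hc
  | head hab _ ih => exact InfSeq.prepend hab ih

/-- if there is an infinite reduction sequence (for the union of an
erasing relation `e` and a non-erasing relation `n`) from `π`, the local
postponement property holds, both relations are finitely branching, and `e` is
strongly normalizing, then there is an infinite `n`-reduction sequence from
`π`. -/
theorem infinite_nonerasing_sequence {X : Type*} (e n : X → X → Prop)
    (hfe : FinBranching e) (hfn : FinBranching n)
    (hpost : ∀ π π₁ π'', e π π₁ → n π₁ π'' →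
      ∃ π', n π π' ∧ Relation.ReflTransGen (fun a b => e a b ∨ n a b) π' π'')
    (hesn : ∀ a : X, SNfrom e a)
    (π : X) (f : ℕ → X) (hf0 : f 0 = π)
    (hf : ∀ i, e (f i) (f (i + 1)) ∨ n (f i) (f (i + 1))) :
    ∃ g : ℕ → X, g 0 = π ∧ ∀ i, n (g i) (g (i + 1)) := by
  classical
  set un : X → X → Prop := fun a b => e a b ∨ n a b with hun
  -- key step: from any point with an infinite union-sequence, take an n-step
  -- to another point with an infinite union-sequence
  have key : ∀ a, InfSeq un a → ∃ b, n a b ∧ InfSeq un b := by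
    intro a ha
    obtain ⟨F, hF0, hFs⟩ := ha
    have hex : ∃ k, n (F k) (F (k + 1)) := by
      by_contra hno
      push_neg at hno
      exact hesn a ⟨F, hF0, fun i => (hFs i).resolve_right (hno i)⟩
    set k := Nat.find hex with hk
    have hkn : n (F k) (F (k + 1)) := Nat.find_spec hex
    have hemin : ∀ i < k, e (F i) (F (i + 1)) :=
      fun i hi => (hFs i).resolve_right (Nat.find_min hex hi)
    have claim : ∀ m, m ≤ k → ∃ b, n (F (k - m)) b ∧
        Relation.ReflTransGen un b (F (k + 1)) := by
      intro m
      induction m with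
      | zero => intro _; exact ⟨F (k + 1), by simpa using hkn, Relation.ReflTransGen.refl⟩
      | succ m ih =>
        intro hm
        obtain ⟨b, hb, hbr⟩ := ih (le_of_lt (Nat.lt_of_succ_le hm))
        have h1 : (k - (m + 1)) + 1 = k - m := by omega
        have he : e (F (k - (m + 1))) (F (k - m)) := by
          rw [← h1]; exact hemin _ (by omega)
        obtain ⟨π', hπ'1, hπ'2⟩ := hpost _ _ _ he hb
        exact ⟨π', hπ'1, hπ'2.trans hbr⟩
    obtain ⟨b, hb, hbr⟩ := claim k le_rfl
    rw [Nat.sub_self, hF0] at hb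
    have hInfk1 : InfSeq un (F (k + 1)) := ⟨fun i => F (k + 1 + i), rfl, fun i => by
      have := hFs (k + 1 + i); simpa [Nat.add_assoc] using this⟩
    exact ⟨b, hb, InfSeq.of_rtg hbr hInfk1⟩
  have hπ : InfSeq un π := ⟨f, hf0, hf⟩
  let G : ℕ → {x : X // InfSeq un x} := fun i =>
    Nat.rec ⟨π, hπ⟩ (fun _ p => ⟨(key p.1 p.2).choose, (key p.1 p.2).choose_spec.2⟩) i
  refine ⟨fun i => (G i).1, rfl, fun i => ?_⟩
  exact (key (G i).1 (G i).2).choose_spec.1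
end

section
/- In an abstract rewriting system, suppose →ₛ ⊆ →ₙ (stratified non-erasing steps are non-erasing steps) and the following diamond-like property holds: if π →ₙ π₁ and π →ₛ π′ with π′ ≠ π₁, then there exists π″ with π₁ →ₛ π″ and a nonempty sequence π′ →ₙ* π″. Then for any π₀ from which every →ₙ-sequence is finite, and any →ₙ-reduction sequence R from π₀ to a →ₙ-normal form π, there exists a →ₛ-reduction sequence R₁ from π₀ to π with length(R) ≤ length(R₁). -/
/-- Concatenation of reduction sequences. -/
lemma Steps.append {X : Type*} {r : X → X → Prop} :
    ∀ {j k : ℕ} {a b c : X}, Steps r j a b → Steps r k b c → Steps r (j + k) a c := by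
  intro j
  induction j with
  | zero => intro k a b c h1 h2; cases h1; simpa using h2
  | succ m ih =>
    rintro k a b c ⟨d, hd, hrest⟩ h2
    have he : m + 1 + k = (m + k) + 1 := by omega
    rw [he]
    exact ⟨d, hd, ih hrest h2⟩

/-- If every `n`-sequence from `a` is finite, then `a` is accessible for the
flipped relation. -/
lemma acc_of_sn {X : Type*} (n : X → X → Prop) (a : X) (h : SNfrom n a) :
    Acc (fun x y => n y x) a := by
  by_contra hacc
  apply h
  have key : ∀ x, ¬Acc (fun x y => n y x) x →
      ∃ y, n x y ∧ ¬Acc (fun x y => n y x) y := by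
    intro x hx
    by_contra hy
    push_neg at hy
    exact hx (Acc.intro x fun y hxy => hy y hxy)
  choose g hg1 hg2 using key
  let f : ℕ → {x : X // ¬Acc (fun x y => n y x) x} :=
    fun i => Nat.rec ⟨a, hacc⟩ (fun _ p => ⟨g p.1 p.2, hg2 p.1 p.2⟩) i
  exact ⟨fun i => (f i).1, rfl, fun i => hg1 (f i).1 (f i).2⟩

/-- Key lemma: an `s`-step loses at most one unit of distance to the normal
form `π`. -/
lemma dist_lemma {X : Type*} {n s : X → X → Prop} {π : X}
    (hsub : ∀ a b, s a b → n a b)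
    (hdiam : ∀ π₀ π₁ π', n π₀ π₁ → s π₀ π' → π' ≠ π₁ →
      ∃ π'', s π₁ π'' ∧ ∃ k, 1 ≤ k ∧ Steps n k π' π'')
    (hnf : ¬ ∃ π', n π π') :
    ∀ (k : ℕ) (a a' : X), Steps n (k + 1) a π → s a a' →
      ∃ j, k ≤ j ∧ Steps n j a' π := by
  intro k
  induction k with
  | zero =>
    rintro a a' ⟨c, hac, hc⟩ hs
    have hc' : c = π := hc
    subst hc'
    by_cases hne : a' = c
    · exact ⟨0, le_refl _, hne⟩
    · obtain ⟨π'', hs'', _⟩ := hdiam a c a' hac hs hne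
      exact absurd ⟨π'', hsub _ _ hs''⟩ hnf
  | succ m ih =>
    rintro a a' ⟨b, hab, hb⟩ hs
    by_cases hne : a' = b
    · exact ⟨m + 1, le_refl _, hne ▸ hb⟩
    · obtain ⟨c, hsc, l, hl1, hlsteps⟩ := hdiam a b a' hab hs hne
      obtain ⟨j, hjm, hj⟩ := ih b c hb hsc
      exact ⟨l + j, by omega, Steps.append hlsteps hj⟩

/-- in an abstract rewriting system with non-erasing steps `n` and
stratified non-erasing steps `s ⊆ n` (finitely branching), satisfying the
diamond-like property and such that every non-`n`-normal element admits an
`s`-step, for any `π₀` from which every `n`-sequence is finite, any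
`n`-reduction sequence from `π₀` to an `n`-normal form `π` can be replaced by
an `s`-reduction sequence from `π₀` to `π` which is at least as long. -/
theorem stratified_is_worse {X : Type*} (n s : X → X → Prop)
    (hfn : FinBranching n)
    (hsub : ∀ a b, s a b → n a b)
    (hdiam : ∀ π π₁ π', n π π₁ → s π π' → π' ≠ π₁ →
      ∃ π'', s π₁ π'' ∧ ∃ k, 1 ≤ k ∧ Steps n k π' π'')
    (hstep : ∀ π : X, (∃ π', n π π') → ∃ π', s π π')
    (π₀ : X) (hsn : SNfrom n π₀)
    (k : ℕ) (π : X) (hR : Steps n k π₀ π) (hnf : ¬ ∃ π', n π π') :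
    ∃ k₁, k ≤ k₁ ∧ Steps s k₁ π₀ π := by
  have hacc := acc_of_sn n π₀ hsn
  clear hsn
  induction hacc generalizing k with
  | intro x hx ih =>
    match k, hR with
    | 0, hR => exact ⟨0, le_refl _, hR⟩
    | m + 1, ⟨π₁, h1, hrest⟩ =>
      obtain ⟨π', hs⟩ := hstep x ⟨π₁, h1⟩
      obtain ⟨j, hjm, hj⟩ := dist_lemma hsub hdiam hnf m x π' ⟨π₁, h1, hrest⟩ hs
      obtain ⟨k₁, hk₁, hseq⟩ := ih π' (hsub _ _ hs) j hj
      exact ⟨k₁ + 1, by omega, ⟨π', hs, hseq⟩⟩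
end

section
/- In an abstract rewriting system with erasing steps →ₑ and non-erasing steps →ₙ, suppose: (a) erasing postponement (if π →ₑ π₁ →ₙ π″ then ∃π′, π →ₙ π′ →* π″); (b) if π →ₙ π′ and π has n cut-redexes then π′ has at least n−1 cut-redexes; (c) if π →ₑ π′ then π′ has strictly fewer cut-redexes than π; (d) every →ₑ-normal object with k erasing redexes admits an →ₑ-sequence of length k to a normal form. Then for every strongly normalizing object π₀ with at least n redexes, there exist a →ₙ-sequence R₁ from π₀ to some →ₙ-normal π and an →ₑ-sequence R₂ from π with n ≤ length(R₁) + length(R₂). -/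
private lemma snfrom_acc {X : Type*} (r : X → X → Prop) (a : X) (h : SNfrom r a) :
    Acc (fun x y => r y x) a := by
  by_contra hna
  have key : ∀ x, ¬ Acc (fun x y => r y x) x → ∃ y, r x y ∧ ¬ Acc (fun x y => r y x) y := by
    intro x hx
    by_contra hk
    push_neg at hk
    exact hx (Acc.intro x fun y hy => hk y hy)
  let g : ℕ → {x : X // ¬ Acc (fun x y => r y x) x} := fun i =>
    Nat.rec ⟨a, hna⟩ (fun _ p => ⟨(key p.1 p.2).choose, (key p.1 p.2).choose_spec.2⟩) i
  exact h ⟨fun i => (g i).1, rfl, fun i => (key (g i).1 (g i).2).choose_spec.1⟩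

private lemma aux_seq {X : Type*} (n : X → X → Prop) (redexes : X → ℕ)
    (hb : ∀ π π', n π π' → redexes π - 1 ≤ redexes π') :
    ∀ a : X, Acc (fun x y => n y x) a →
      ∃ k π, Steps n k a π ∧ (¬ ∃ π', n π π') ∧ redexes a ≤ k + redexes π := by
  intro a h
  induction h with
  | intro a _ ih =>
    by_cases hex : ∃ a', n a a'
    · obtain ⟨a', ha'⟩ := hex
      obtain ⟨k, π, hs, hnf, hle⟩ := ih a' ha'
      refine ⟨k + 1, π, ⟨a', ha', hs⟩, hnf, ?_⟩
      have := hb a a' ha'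
      omega
    · exact ⟨0, a, rfl, hex, by omega⟩

/-- abstract form of the canonical reduction lemma.  In a finitely
branching abstract rewriting system with erasing steps `e` and non-erasing
steps `n`, with a count `redexes` of cut-redexes, assume: (a) erasing
postponement; (b) a non-erasing step loses at most one redex; (c) an erasing
step strictly decreases the number of redexes; (d) every `n`-normal object with
`k` (erasing) redexes admits an `e`-sequence of length `k` to a normal form.
Then for every strongly normalizing object `π₀` with at least `m` redexes there
are an `n`-sequence `R₁` from `π₀` to some `n`-normal `π` and an `e`-sequence
`R₂` from `π` with `m ≤ length R₁ + length R₂`. -/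
theorem nonerasing_erasing_sequences {X : Type*} (e n : X → X → Prop)
    (hfe : FinBranching e) (hfn : FinBranching n)
    (redexes : X → ℕ)
    (ha : ∀ π π₁ π'', e π π₁ → n π₁ π'' →
      ∃ π', n π π' ∧ Relation.ReflTransGen (fun a b => e a b ∨ n a b) π' π'')
    (hb : ∀ π π', n π π' → redexes π - 1 ≤ redexes π')
    (hc : ∀ π π', e π π' → redexes π' < redexes π)
    (hd : ∀ π : X, (¬ ∃ π', n π π') →
      ∃ π'', Steps e (redexes π) π π'' ∧ ¬ ∃ π''', (e π'' π''' ∨ n π'' π'''))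
    (π₀ : X) (hsn : SNfrom (fun a b => e a b ∨ n a b) π₀)
    (m : ℕ) (hm : m ≤ redexes π₀) :
    ∃ (k₁ k₂ : ℕ) (π π₂ : X), Steps n k₁ π₀ π ∧ (¬ ∃ π', n π π') ∧
      Steps e k₂ π π₂ ∧ m ≤ k₁ + k₂ := by
  have hsnn : SNfrom n π₀ := fun ⟨f, h0, hf⟩ => hsn ⟨f, h0, fun i => Or.inr (hf i)⟩
  obtain ⟨k, π, hs, hnf, hle⟩ := aux_seq n redexes hb π₀ (snfrom_acc n π₀ hsnn)
  obtain ⟨π₂, hsteps, _⟩ := hd π hnf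
  exact ⟨k, redexes π, π, π₂, hs, hnf, hsteps, by omega⟩
end

section
/- In the non-idempotent intersection type system R^ex for the λ-calculus, every typable λ-term is strongly normalizing under β-reduction. -/
/-- Untyped λ-terms with de Bruijn indices. -/
inductive Tm : Type
  | var : ℕ → Tm
  | app : Tm → Tm → Tm
  | lam : Tm → Tm

namespace Tm

/-- Lift (shift by `d`) the free variables of index `≥ k`. -/
def lift (d : ℕ) : ℕ → Tm → Tm
  | k, .var m => if m < k then .var m else .var (m + d)
  | k, .app a b => .app (lift d k a) (lift d k b)
  | k, .lam a => .lam (lift d (k + 1) a)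

/-- Capture-avoiding substitution of `s` for the variable of index `k`. -/
def subst (s : Tm) : ℕ → Tm → Tm
  | k, .var m => if m < k then .var m else if m = k then lift k 0 s else .var (m - 1)
  | k, .app a b => .app (subst s k a) (subst s k b)
  | k, .lam a => .lam (subst s (k + 1) a)

end Tm

/-- One step of β-reduction (anywhere in the term). -/
inductive Beta : Tm → Tm → Prop
  | beta (t u : Tm) : Beta (.app (.lam t) u) (Tm.subst u 0 t)
  | appL {a a' : Tm} (b : Tm) : Beta a a' → Beta (.app a b) (.app a' b)
  | appR (a : Tm) {b b' : Tm} : Beta b b' → Beta (.app a b) (.app a b')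
  | lam {a a' : Tm} : Beta a a' → Beta (.lam a) (.lam a')

/-- Non-idempotent intersection types: `α ::= γ | [α₁,…,αₙ] → α`, where `γ`
ranges over a set `A` of type atoms and a finite multiset of types is
represented by a list of types. -/
inductive Ty (A : Type) : Type
  | atom : A → Ty A
  | arrow : List (Ty A) → Ty A → Ty A

/-- Environments map (de Bruijn) variables to finite multisets of types. -/
abbrev Env (A : Type) := ℕ → Multiset (Ty A)

/-- Extend an environment with a multiset of types for the freshly bound
variable `0`. -/
def consEnv {A : Type} (a : Multiset (Ty A)) (Γ : Env A) : Env A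
  | 0 => a
  | m + 1 => Γ m

/-- Pointwise sum of an environment and a list of environments. -/
def sumEnv {A : Type} (Γ₀ : Env A) (Γs : List (Env A)) : Env A :=
  fun m => Γ₀ m + (Γs.map fun Γ => Γ m).sum

/-- The typing judgements of System R^ex: the `var` rule types a variable `x`
with `x : [α]` and arbitrary multisets on the other variables; the `abs` rule
binds the multiset of types of the abstracted variable; the `app` rule requires
`n ≥ 1` typings of the argument, one for each element of the multiset
`[α₁,…,αₙ]`, and sums the environments pointwise. -/
inductive TypingRex (A : Type) : Env A → Tm → Ty A → Prop
  | var (Γ : Env A) (x : ℕ) (α : Ty A) (h : Γ x = {α}) : TypingRex A Γ (.var x) α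
  | abs {Γ : Env A} {a : List (Ty A)} {t : Tm} {α : Ty A}
      (h : TypingRex A (consEnv (↑a) Γ) t α) :
      TypingRex A Γ (.lam t) (.arrow a α)
  | app {Γ₀ : Env A} {Γs : List (Env A)} {v u : Tm} {as : List (Ty A)} {α : Ty A}
      (hv : TypingRex A Γ₀ v (.arrow as α))
      (hne : as ≠ [])
      (hlen : Γs.length = as.length)
      (hu : ∀ i (hi : i < as.length) (hj : i < Γs.length),
        TypingRex A (Γs.get ⟨i, hj⟩) u (as.get ⟨i, hi⟩)) :
      TypingRex A (sumEnv Γ₀ Γs) (.app v u) α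

/-!
Every R^ex derivation contains a relevant one, with a smaller environment, in which every
assumption is used and weakening only happens at abstractions. In the relevant system the size of
derivations strictly decreases along β-reduction: the types assumed for the bound variable of a
redex `(λx.t)u` are matched one-to-one with typings of `u`, each of which replaces the axiom of one
occurrence of `x`, while the abstraction and application nodes of the redex disappear.
Non-idempotence is what makes this work: no typing of `u` is ever duplicated. The size therefore
bounds the length of every reduction sequence.
-/

namespace Tm

theorem lift_var (d k x : ℕ) : lift d k (.var x) = .var (if x < k then x else x + d) := by
  unfold lift; split_ifs <;> rfl

theorem subst_var_self (s : Tm) (k : ℕ) : subst s k (.var k) = lift k 0 s := by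
  simp [subst]

theorem subst_var_of_ne (s : Tm) {k x : ℕ} (h : x ≠ k) :
    subst s k (.var x) = .var (if x < k then x else x - 1) := by
  unfold subst; split_ifs <;> rfl

end Tm

section Env
variable {A : Type}

theorem consEnv_eta (Γ : Env A) : consEnv (Γ 0) (fun m => Γ (m + 1)) = Γ := by
  funext m; cases m <;> rfl

theorem consEnv_add (a b : Multiset (Ty A)) (Γ Δ : Env A) :
    consEnv a Γ + consEnv b Δ = consEnv (a + b) (Γ + Δ) := by
  funext m; cases m <;> rfl

theorem sumEnv_eq_add_sum (Γ₀ : Env A) (Γs : List (Env A)) : sumEnv Γ₀ Γs = Γ₀ + Γs.sum := by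
  funext m; simp [sumEnv, Pi.list_sum_apply]

@[simps]
def liftEnv (d k : ℕ) : Env A →+ Env A where
  toFun Γ m := if m < k then Γ m else if m < k + d then 0 else Γ (m - d)
  map_zero' := by funext m; simp
  map_add' Γ Δ := by funext m; simp only [Pi.add_apply]; split_ifs <;> simp

theorem liftEnv_zero_left (k : ℕ) (Γ : Env A) : liftEnv 0 k Γ = Γ := by
  funext m; simp only [liftEnv_apply]; split_ifs <;> first | rfl | (exfalso; omega)

theorem liftEnv_single (d k x : ℕ) (a : Multiset (Ty A)) :
    liftEnv d k (Pi.single x a : Env A) = Pi.single (if x < k then x else x + d) a := by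
  funext m
  simp only [liftEnv_apply, Pi.single_apply]
  split_ifs <;> first | rfl | (exfalso; omega)

theorem liftEnv_succ_consEnv (d k : ℕ) (c : Multiset (Ty A)) (Γ : Env A) :
    liftEnv d (k + 1) (consEnv c Γ) = consEnv c (liftEnv d k Γ) := by
  funext m
  rcases m with _ | m
  · rfl
  · simp only [liftEnv_apply, consEnv]
    split_ifs <;> first | rfl | (exfalso; omega) | rw [show m + 1 - d = m - d + 1 by omega]

theorem liftEnv_succ_zero (d : ℕ) (Γ : Env A) :
    liftEnv (d + 1) 0 Γ = consEnv 0 (liftEnv d 0 Γ) := by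
  funext m
  rcases m with _ | m
  · rfl
  · simp only [liftEnv_apply, consEnv]
    split_ifs <;> first | rfl | (exfalso; omega) | (congr 1; omega)

/-- The environment of `Tm.subst s k t` without the contribution of `s`. -/
@[simps]
def removeEnv (k : ℕ) : Env A →+ Env A where
  toFun Γ m := if m < k then Γ m else Γ (m + 1)
  map_zero' := by funext m; simp
  map_add' Γ Δ := by funext m; simp only [Pi.add_apply]; split_ifs <;> rfl

theorem removeEnv_single_self (k : ℕ) (a : Multiset (Ty A)) :
    removeEnv k (Pi.single k a : Env A) = 0 := by
  funext m
  simp only [removeEnv_apply, Pi.single_apply]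
  split_ifs <;> first | rfl | (exfalso; omega)

theorem removeEnv_single_of_ne {k x : ℕ} (h : x ≠ k) (a : Multiset (Ty A)) :
    removeEnv k (Pi.single x a : Env A) = Pi.single (if x < k then x else x - 1) a := by
  funext m
  simp only [removeEnv_apply, Pi.single_apply]
  split_ifs <;> first | rfl | (exfalso; omega)

theorem removeEnv_zero_consEnv (c : Multiset (Ty A)) (Γ : Env A) :
    removeEnv 0 (consEnv c Γ) = Γ :=
  rfl

theorem removeEnv_succ_consEnv (k : ℕ) (c : Multiset (Ty A)) (Γ : Env A) :
    removeEnv (k + 1) (consEnv c Γ) = consEnv c (removeEnv k Γ) := by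
  funext m
  rcases m with _ | m
  · rfl
  · simp only [removeEnv_apply, consEnv]
    split_ifs <;> first | rfl | (exfalso; omega)

end Env

/-- Size-indexed derivations of the relevant variant of R^ex: variables are typed in singleton
environments and weakening happens at abstractions (`c ≤ a`). A judgement `Sum.inr a` types a term
once with each element of the multiset `a`, adding up environments and sizes. -/
inductive Deriv {A : Type} : Env A → Tm → Ty A ⊕ Multiset (Ty A) → ℕ → Prop
  | var (x : ℕ) (α : Ty A) : Deriv (Pi.single x {α}) (.var x) (.inl α) 1
  | abs {Γ : Env A} {c : Multiset (Ty A)} {a : List (Ty A)} {t : Tm} {α : Ty A} {n : ℕ} :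
      Deriv (consEnv c Γ) t (.inl α) n → c ≤ ↑a → Deriv Γ (.lam t) (.inl (.arrow a α)) (n + 1)
  | app {Γ Δ : Env A} {v u : Tm} {as : List (Ty A)} {α : Ty A} {n m : ℕ} :
      Deriv Γ v (.inl (.arrow as α)) n → as ≠ [] → Deriv Δ u (.inr ↑as) m →
      Deriv (Γ + Δ) (.app v u) (.inl α) (n + m + 1)
  | nil (t : Tm) : Deriv 0 t (.inr 0) 0
  | cons {Γ Δ : Env A} {t : Tm} {α : Ty A} {a : Multiset (Ty A)} {n m : ℕ} :
      Deriv Γ t (.inl α) n → Deriv Δ t (.inr a) m → Deriv (Γ + Δ) t (.inr (α ::ₘ a)) (n + m)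

namespace Deriv
variable {A : Type} {Γ Δ : Env A} {t u : Tm} {τ : Ty A ⊕ Multiset (Ty A)} {n m : ℕ}

theorem lift (d : Deriv Γ t τ n) (e k : ℕ) : Deriv (liftEnv e k Γ) (Tm.lift e k t) τ n := by
  induction d generalizing k with
  | var x α =>
    rw [liftEnv_single, Tm.lift_var]
    exact .var _ α
  | abs _ hc ih =>
    have := ih (k + 1)
    rw [liftEnv_succ_consEnv] at this
    exact .abs this hc
  | app _ hne _ ihv ihu =>
    rw [map_add]
    exact .app (ihv k) hne (ihu k)
  | nil t =>
    rw [map_zero]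
    exact .nil _
  | cons _ _ ihh iht =>
    rw [map_add]
    exact .cons (ihh k) (iht k)

theorem inr_zero (d : Deriv Δ u (.inr 0) m) : Δ = 0 ∧ m = 0 := by
  generalize hτ : (Sum.inr 0 : Ty A ⊕ Multiset (Ty A)) = τ at d
  cases d with
  | nil => exact ⟨rfl, rfl⟩
  | _ => simp at hτ

theorem inl_of_inr_singleton {α : Ty A} (d : Deriv Δ u (.inr {α}) m) : Deriv Δ u (.inl α) m := by
  generalize hτ : (Sum.inr {α} : Ty A ⊕ Multiset (Ty A)) = τ at d
  cases d with
  | cons dh dt =>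
    obtain ⟨rfl, rfl⟩ := (Multiset.singleton_eq_cons_iff _).1 (Sum.inr_injective hτ)
    obtain ⟨rfl, rfl⟩ := dt.inr_zero
    simpa using dh
  | _ => simp at hτ

theorem split_inr_add {a b : Multiset (Ty A)} (d : Deriv Δ u (.inr (a + b)) m) :
    ∃ Δ₁ Δ₂ m₁ m₂, Deriv Δ₁ u (.inr a) m₁ ∧ Deriv Δ₂ u (.inr b) m₂ ∧ Δ = Δ₁ + Δ₂ ∧
      m = m₁ + m₂ := by
  generalize hτ : (Sum.inr (a + b) : Ty A ⊕ Multiset (Ty A)) = τ at d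
  induction d generalizing a b with
  | nil =>
    obtain ⟨rfl, rfl⟩ := add_eq_zero.1 (Sum.inr_injective hτ)
    exact ⟨0, 0, 0, 0, .nil _, .nil _, (add_zero 0).symm, rfl⟩
  | @cons Γ Δ t α c n m dh _ _ iht =>
    have hc : a + b = α ::ₘ c := Sum.inr_injective hτ
    rcases Multiset.mem_add.1 (hc ▸ Multiset.mem_cons_self α c) with hα | hα
    · obtain ⟨a, rfl⟩ := Multiset.exists_cons_of_mem hα
      rw [Multiset.cons_add, Multiset.cons_inj_right] at hc
      obtain ⟨Δ₁, Δ₂, m₁, m₂, d₁, d₂, rfl, rfl⟩ := iht (congrArg Sum.inr hc)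
      exact ⟨Γ + Δ₁, Δ₂, n + m₁, m₂, .cons dh d₁, d₂, (add_assoc _ _ _).symm, by omega⟩
    · obtain ⟨b, rfl⟩ := Multiset.exists_cons_of_mem hα
      rw [Multiset.add_cons, Multiset.cons_inj_right] at hc
      obtain ⟨Δ₁, Δ₂, m₁, m₂, d₁, d₂, rfl, rfl⟩ := iht (congrArg Sum.inr hc)
      exact ⟨Δ₁, Γ + Δ₂, m₁, n + m₂, d₁, .cons dh d₂, add_left_comm _ _ _, by omega⟩
  | _ => simp at hτ

theorem restrict_inr {a c : Multiset (Ty A)} (d : Deriv Δ u (.inr a) m) (h : c ≤ a) :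
    ∃ Δ' ≤ Δ, ∃ m' ≤ m, Deriv Δ' u (.inr c) m' := by
  obtain ⟨r, rfl⟩ := Multiset.le_iff_exists_add.1 h
  obtain ⟨Δ₁, Δ₂, m₁, m₂, d₁, -, rfl, rfl⟩ := d.split_inr_add
  exact ⟨Δ₁, le_add_of_nonneg_right fun _ => zero_le, m₁, by omega, d₁⟩

/-- Each derivation of `u` replaces an axiom of size `1` for the variable `k`, whence the bound. -/
theorem subst (d : Deriv Γ t τ n) {k : ℕ} (hu : Deriv Δ u (.inr (Γ k)) m) :
    ∃ n' ≤ n + m, Deriv (removeEnv k Γ + liftEnv k 0 Δ) (Tm.subst u k t) τ n' := by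
  induction d generalizing k Δ m with
  | var x α =>
    by_cases hx : x = k
    · subst hx
      rw [Pi.single_eq_same] at hu
      rw [removeEnv_single_self, zero_add, Tm.subst_var_self]
      exact ⟨m, by omega, hu.inl_of_inr_singleton.lift x 0⟩
    · rw [Pi.single_eq_of_ne (Ne.symm hx)] at hu
      obtain ⟨rfl, rfl⟩ := hu.inr_zero
      rw [removeEnv_single_of_ne hx, Tm.subst_var_of_ne u hx]
      simp only [map_zero, add_zero]
      exact ⟨1, le_rfl, .var _ α⟩
  | abs _ hc ih =>
    obtain ⟨n', hn', d'⟩ := ih (k := k + 1) hu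
    rw [removeEnv_succ_consEnv, liftEnv_succ_zero, consEnv_add, add_zero] at d'
    exact ⟨n' + 1, by omega, .abs d' hc⟩
  | app _ hne _ ihv ihu =>
    obtain ⟨Δ₁, Δ₂, m₁, m₂, d₁, d₂, rfl, rfl⟩ := hu.split_inr_add
    obtain ⟨n₁, hn₁, e₁⟩ := ihv d₁
    obtain ⟨n₂, hn₂, e₂⟩ := ihu d₂
    refine ⟨n₁ + n₂ + 1, by omega, ?_⟩
    convert e₁.app hne e₂ using 1
    · simp only [map_add]
      abel
    · rfl
  | nil =>
    obtain ⟨rfl, rfl⟩ := hu.inr_zero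
    rw [map_zero, map_zero, add_zero]
    exact ⟨0, le_rfl, .nil _⟩
  | cons _ _ ihh iht =>
    obtain ⟨Δ₁, Δ₂, m₁, m₂, d₁, d₂, rfl, rfl⟩ := hu.split_inr_add
    obtain ⟨n₁, hn₁, e₁⟩ := ihh d₁
    obtain ⟨n₂, hn₂, e₂⟩ := iht d₂
    refine ⟨n₁ + n₂, by omega, ?_⟩
    convert e₁.cons e₂ using 1
    simp only [map_add]
    abel

theorem exists_abs_of_le {Γ' : Env A} {c : Multiset (Ty A)} {a : List (Ty A)} {α : Ty A}
    (d : Deriv Γ' t (.inl α) n) (hΓ : Γ' ≤ consEnv c Γ) (hc : c ≤ ↑a) :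
    ∃ Γ'' ≤ Γ, Deriv Γ'' (.lam t) (.inl (.arrow a α)) (n + 1) := by
  rw [← consEnv_eta Γ'] at d
  exact ⟨_, fun m => hΓ (m + 1), .abs d ((hΓ 0).trans hc)⟩

/-- Quantitative subject reduction. An empty multiset of types is the one judgement that does not
shrink: it is derived with size `0` for every term. -/
theorem subject_reduction (d : Deriv Γ t τ n) {t' : Tm} (h : Beta t t') (hτ : τ ≠ .inr 0) :
    ∃ Γ' ≤ Γ, ∃ n' < n, Deriv Γ' t' τ n' := by
  induction d generalizing t' with
  | var => cases h
  | abs _ hc ih =>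
    cases h with
    | lam h =>
      obtain ⟨Γ', hΓ', n', hn', d'⟩ := ih h (by simp)
      obtain ⟨Γ'', hΓ'', d''⟩ := d'.exists_abs_of_le hΓ' hc
      exact ⟨Γ'', hΓ'', n' + 1, by omega, d''⟩
  | app dv hne du ihv ihu =>
    cases h with
    | beta s _ =>
      cases dv with
      | abs ds hc =>
        obtain ⟨Δ', hΔ', m', hm', du'⟩ := du.restrict_inr hc
        obtain ⟨n', hn', d'⟩ := ds.subst (k := 0) du'
        rw [removeEnv_zero_consEnv, liftEnv_zero_left] at d'
        exact ⟨_, add_le_add_right hΔ' _, n', by omega, d'⟩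
    | appL _ h =>
      obtain ⟨Γ', hΓ', n', hn', d'⟩ := ihv h (by simp)
      exact ⟨_, add_le_add_left hΓ' _, _, by omega, .app d' hne du⟩
    | appR _ h =>
      obtain ⟨Δ', hΔ', m', hm', d'⟩ := ihu h (by simpa using hne)
      exact ⟨_, add_le_add_right hΔ' _, _, by omega, .app dv hne d'⟩
  | nil => exact absurd rfl hτ
  | @cons Γ Δ t α a n m _ _ ihh iht =>
    obtain ⟨Γ₁, hΓ₁, n₁, hn₁, e₁⟩ := ihh h (by simp)
    by_cases ha : a = 0
    · subst ha
      exact ⟨Γ₁ + 0, add_le_add hΓ₁ fun _ => zero_le, n₁ + 0, by omega, .cons e₁ (.nil _)⟩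
    · obtain ⟨Γ₂, hΓ₂, n₂, hn₂, e₂⟩ := iht h (by simpa using ha)
      exact ⟨_, add_le_add hΓ₁ hΓ₂, _, by omega, .cons e₁ e₂⟩

theorem not_exists_beta_chain {α : Ty A} (d : Deriv Γ t (.inl α) n) :
    ¬ ∃ f : ℕ → Tm, f 0 = t ∧ ∀ i, Beta (f i) (f (i + 1)) := by
  induction n using Nat.strong_induction_on generalizing Γ t with
  | _ n ih =>
    rintro ⟨f, rfl, hf⟩
    obtain ⟨Γ', -, n', hn', d'⟩ := d.subject_reduction (hf 0) (by simp)
    exact ih n' hn' d' ⟨fun i => f (i + 1), rfl, fun i => hf (i + 1)⟩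

theorem exists_inr_of_forall₂ {Γs : List (Env A)} {as : List (Ty A)}
    (h : List.Forall₂ (fun Γ α => ∃ Γ' ≤ Γ, ∃ n, Deriv Γ' u (.inl α) n) Γs as) :
    ∃ Δ ≤ Γs.sum, ∃ m, Deriv Δ u (.inr ↑as) m := by
  induction h with
  | nil => exact ⟨0, le_rfl, 0, .nil u⟩
  | cons hα _ ih =>
    obtain ⟨Γ', hΓ', n, d⟩ := hα
    obtain ⟨Δ, hΔ, m, e⟩ := ih
    exact ⟨Γ' + Δ, by simpa using add_le_add hΓ' hΔ, n + m, by simpa using d.cons e⟩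

end Deriv

theorem TypingRex.exists_deriv {A : Type} {Γ : Env A} {t : Tm} {α : Ty A}
    (h : TypingRex A Γ t α) : ∃ Γ' ≤ Γ, ∃ n, Deriv Γ' t (.inl α) n := by
  induction h with
  | var Γ x α hx =>
    refine ⟨_, fun m => ?_, 1, .var x α⟩
    rcases eq_or_ne m x with rfl | hm <;> simp [*]
  | abs _ ih =>
    obtain ⟨Γ', hΓ', n, d⟩ := ih
    obtain ⟨Γ'', hΓ'', d'⟩ := d.exists_abs_of_le hΓ' le_rfl
    exact ⟨Γ'', hΓ'', n + 1, d'⟩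
  | app _ hne hlen _ ihv ihu =>
    obtain ⟨Γ₀, hΓ₀, n, dv⟩ := ihv
    obtain ⟨Δ, hΔ, m, du⟩ :=
      Deriv.exists_inr_of_forall₂ (List.forall₂_iff_get.2 ⟨hlen, fun i hj hi => ihu i hi hj⟩)
    rw [sumEnv_eq_add_sum]
    exact ⟨_, add_le_add hΓ₀ hΔ, _, .app dv hne du⟩

theorem Rex_typable_SN_general {A : Type} {Γ : Env A} {t : Tm} {α : Ty A}
    (h : TypingRex A Γ t α) :
    ¬ ∃ f : ℕ → Tm, f 0 = t ∧ ∀ i, Beta (f i) (f (i + 1)) := by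
  obtain ⟨_, -, _, d⟩ := h.exists_deriv
  exact d.not_exists_beta_chain

/-- every λ-term typable in System R^ex is strongly normalizing
under β-reduction: there is no infinite β-reduction sequence from it. -/
theorem Rex_typable_SN {A : Type} [Countable A] {Γ : Env A} {t : Tm} {α : Ty A}
    (h : TypingRex A Γ t α) :
    ¬ ∃ f : ℕ → Tm, f 0 = t ∧ ∀ i, Beta (f i) (f (i + 1)) :=
  Rex_typable_SN_general h
end
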